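/- arXiv:2007.15762 — 2 statements merged into one kernel-verified Lean document; each statement's English description precedes it below -/
import Mathlib

section
/- Let A be a graded-commutative differential bigraded algebra generated over ℂ by degree-(1,0) elements φ₁,…,φ₅ and their conjugates φ̄₁,…,φ̄₅ with ∂φ₁ = ∂φ₂ = 0, ∂φ₃ = φ₁∧φ₂, ∂φ₄ = φ₁∧φ₃, ∂φ₅ = φ₂∧φ₃, ∂̄φ_j = 0 for all j, and the conjugate relations. Then φ₁∧φ₂∧φ₄∧φ₅∧φ̄₁∧φ̄₂ = ∂̄∂(φ₃∧φ₄∧φ₅∧φ̄₃), φ₁∧φ₂∧φ₃∧φ₅∧φ̄₁∧φ̄₂ = ∂̄∂(φ₂∧φ₄∧φ₅∧φ̄₃), and φ₁∧φ₂∧φ₃∧φ₄∧φ̄₁∧φ̄₂ = ∂̄∂(φ₁∧φ₄∧φ₅∧φ̄₃). -/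
/-!
Write `w = φ₄ φ₅ φ̄₃`. The Leibniz rule gives `∂w = φ₁φ₃φ₅φ̄₃ − φ₄φ₂φ₃φ̄₃`, and then
`∂(xw) = ∂x · w − x ∂w` for `x = φ₃, φ₂, φ₁`: in each case every term but one contains a
repeated generator, hence vanishes, and the surviving term is reordered into
`φ₁φ₂φ₄φ₅φ̄₃`, `φ₁φ₂φ₃φ₅φ̄₃`, `φ₁φ₂φ₃φ₄φ̄₃` respectively. Finally `∂̄` kills the four
holomorphic generators, so it moves past them without net sign and replaces `φ̄₃` by `φ̄₁φ̄₂`.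
-/

section Anticommuting

variable {A : Type*} [Ring A] {S : Set A}

theorem mul_mul_eq_neg_mul_mul_of_anticomm (hanti : ∀ g ∈ S, ∀ h ∈ S, g * h = -(h * g))
    {g h : A} (hg : g ∈ S) (hh : h ∈ S) (x : A) : g * (h * x) = -(h * (g * x)) := by
  rw [← mul_assoc, hanti g hg h hh, neg_mul, mul_assoc]

theorem mul_mul_self_eq_zero_of_anticomm [IsAddTorsionFree A]
    (hanti : ∀ g ∈ S, ∀ h ∈ S, g * h = -(h * g)) {g : A} (hg : g ∈ S) (x : A) :
    g * (g * x) = 0 := by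
  rw [← mul_assoc, self_eq_neg.mp (hanti g hg g hg), zero_mul]

theorem map_mul_mul_of_map_eq_zero {D : A → A}
    (hL : ∀ g ∈ S, ∀ x : A, D (g * x) = D g * x - g * D x)
    {a b : A} (ha : a ∈ S) (hb : b ∈ S) (hDa : D a = 0) (hDb : D b = 0) (x : A) :
    D (a * (b * x)) = a * (b * D x) := by
  rw [hL a ha, hL b hb, hDa, hDb]
  simp only [zero_mul, zero_sub, mul_neg, neg_neg]

end Anticommuting

section Iwasawa

variable {A : Type*} [Ring A] {S : Set A} {φ : Fin 5 → A} {D : A → A} {b : A}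

theorem iwasawa_del_three_four (hL : ∀ g ∈ S, ∀ x : A, D (g * x) = D g * x - g * D x)
    (hφ : ∀ j, φ j ∈ S) (hd3 : D (φ 3) = φ 0 * φ 2) (hd4 : D (φ 4) = φ 1 * φ 2) (hb : D b = 0) :
    D (φ 3 * (φ 4 * b)) = φ 0 * (φ 2 * (φ 4 * b)) - φ 3 * (φ 1 * (φ 2 * b)) := by
  rw [hL _ (hφ 3), hd3, hL _ (hφ 4), hd4, hb, mul_zero, sub_zero, mul_assoc, mul_assoc]

variable [IsAddTorsionFree A]

theorem iwasawa_del_two_three_four (hanti : ∀ g ∈ S, ∀ h ∈ S, g * h = -(h * g))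
    (hL : ∀ g ∈ S, ∀ x : A, D (g * x) = D g * x - g * D x) (hφ : ∀ j, φ j ∈ S)
    (hd2 : D (φ 2) = φ 0 * φ 1) (hd3 : D (φ 3) = φ 0 * φ 2) (hd4 : D (φ 4) = φ 1 * φ 2)
    (hb : D b = 0) :
    D (φ 2 * (φ 3 * (φ 4 * b))) = φ 0 * (φ 1 * (φ 3 * (φ 4 * b))) := by
  have swap {g h : A} (hg : g ∈ S) (hh : h ∈ S) :=
    mul_mul_eq_neg_mul_mul_of_anticomm hanti hg hh
  have sq {g : A} (hg : g ∈ S) := mul_mul_self_eq_zero_of_anticomm hanti hg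
  rw [hL _ (hφ 2), hd2, iwasawa_del_three_four hL hφ hd3 hd4 hb, mul_sub,
    swap (hφ 2) (hφ 0), sq (hφ 2), swap (hφ 2) (hφ 3), swap (hφ 2) (hφ 1), sq (hφ 2)]
  simp only [mul_assoc, mul_zero, neg_zero, sub_zero]

theorem iwasawa_del_one_three_four (hanti : ∀ g ∈ S, ∀ h ∈ S, g * h = -(h * g))
    (hL : ∀ g ∈ S, ∀ x : A, D (g * x) = D g * x - g * D x) (hφ : ∀ j, φ j ∈ S)
    (hd1 : D (φ 1) = 0) (hd3 : D (φ 3) = φ 0 * φ 2) (hd4 : D (φ 4) = φ 1 * φ 2)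
    (hb : D b = 0) :
    D (φ 1 * (φ 3 * (φ 4 * b))) = φ 0 * (φ 1 * (φ 2 * (φ 4 * b))) := by
  have swap {g h : A} (hg : g ∈ S) (hh : h ∈ S) :=
    mul_mul_eq_neg_mul_mul_of_anticomm hanti hg hh
  have sq {g : A} (hg : g ∈ S) := mul_mul_self_eq_zero_of_anticomm hanti hg
  rw [hL _ (hφ 1), hd1, iwasawa_del_three_four hL hφ hd3 hd4 hb, mul_sub,
    swap (hφ 1) (hφ 0), swap (hφ 1) (hφ 3), sq (hφ 1)]
  simp only [zero_mul, mul_zero, neg_zero, sub_zero, zero_sub, neg_neg]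

theorem iwasawa_del_zero_three_four (hanti : ∀ g ∈ S, ∀ h ∈ S, g * h = -(h * g))
    (hL : ∀ g ∈ S, ∀ x : A, D (g * x) = D g * x - g * D x) (hφ : ∀ j, φ j ∈ S)
    (hd0 : D (φ 0) = 0) (hd3 : D (φ 3) = φ 0 * φ 2) (hd4 : D (φ 4) = φ 1 * φ 2)
    (hb : D b = 0) :
    D (φ 0 * (φ 3 * (φ 4 * b))) = φ 0 * (φ 1 * (φ 2 * (φ 3 * b))) := by
  have swap {g h : A} (hg : g ∈ S) (hh : h ∈ S) :=
    mul_mul_eq_neg_mul_mul_of_anticomm hanti hg hh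
  have sq {g : A} (hg : g ∈ S) := mul_mul_self_eq_zero_of_anticomm hanti hg
  rw [hL _ (hφ 0), hd0, iwasawa_del_three_four hL hφ hd3 hd4 hb, mul_sub, sq (hφ 0),
    swap (hφ 3) (hφ 1), swap (hφ 3) (hφ 2)]
  simp only [zero_mul, zero_sub, mul_neg, neg_neg]

end Iwasawa

theorem stmt8_general {A : Type*} [Ring A] [Algebra ℂ A]
    (φ φb : Fin 5 → A) (del delbar : A →ₗ[ℂ] A)
    (S : Set A) (hS : S = Set.range φ ∪ Set.range φb)
    (hanti : ∀ g ∈ S, ∀ h ∈ S, g * h = -(h * g))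
    (hLd : ∀ g ∈ S, ∀ x : A, del (g * x) = del g * x - g * del x)
    (hLdb : ∀ g ∈ S, ∀ x : A, delbar (g * x) = delbar g * x - g * delbar x)
    (hd0 : del (φ 0) = 0) (hd1 : del (φ 1) = 0)
    (hd2 : del (φ 2) = φ 0 * φ 1) (hd3 : del (φ 3) = φ 0 * φ 2) (hd4 : del (φ 4) = φ 1 * φ 2)
    (hdbφ : ∀ j, delbar (φ j) = 0)
    (hdelφb : ∀ j, del (φb j) = 0)
    (hdb2 : delbar (φb 2) = φb 0 * φb 1) :
    φ 0 * φ 1 * φ 3 * φ 4 * φb 0 * φb 1 = delbar (del (φ 2 * φ 3 * φ 4 * φb 2)) ∧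
    φ 0 * φ 1 * φ 2 * φ 4 * φb 0 * φb 1 = delbar (del (φ 1 * φ 3 * φ 4 * φb 2)) ∧
    φ 0 * φ 1 * φ 2 * φ 3 * φb 0 * φb 1 = delbar (del (φ 0 * φ 3 * φ 4 * φb 2)) := by
  have : IsAddTorsionFree A := .of_isTorsionFree ℂ A
  have hφ : ∀ j, φ j ∈ S := fun j => hS ▸ Or.inl ⟨j, rfl⟩
  have hdelbar : ∀ i j k l, delbar (φ i * (φ j * (φ k * (φ l * φb 2)))) =
      φ i * (φ j * (φ k * (φ l * (φb 0 * φb 1)))) := fun i j k l => by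
    rw [map_mul_mul_of_map_eq_zero hLdb (hφ i) (hφ j) (hdbφ i) (hdbφ j),
      map_mul_mul_of_map_eq_zero hLdb (hφ k) (hφ l) (hdbφ k) (hdbφ l), hdb2]
  simp only [mul_assoc]
  refine ⟨?_, ?_, ?_⟩
  · rw [iwasawa_del_two_three_four hanti hLd hφ hd2 hd3 hd4 (hdelφb 2), hdelbar]
  · rw [iwasawa_del_one_three_four hanti hLd hφ hd1 hd3 hd4 (hdelφb 2), hdelbar]
  · rw [iwasawa_del_zero_three_four hanti hLd hφ hd0 hd3 hd4 (hdelφb 2), hdelbar]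

/-- In the graded-commutative differential bigraded algebra generated by degree-(1,0) elements
φ₁,…,φ₅ and their conjugates φ̄₁,…,φ̄₅ (here `φ 0,…,φ 4` and `φb 0,…,φb 4`), with
∂φ₁ = ∂φ₂ = 0, ∂φ₃ = φ₁∧φ₂, ∂φ₄ = φ₁∧φ₃, ∂φ₅ = φ₂∧φ₃, ∂̄φⱼ = 0 and the conjugate relations,
where `del`, `delbar` are anti-derivations (generators anticommute, and the Leibniz rule with
sign holds for left multiplication by a generator), the three ∂̄∂-exactness identities of the
paper hold:
φ₁φ₂φ₄φ₅φ̄₁φ̄₂ = ∂̄∂(φ₃φ₄φ₅φ̄₃), φ₁φ₂φ₃φ₅φ̄₁φ̄₂ = ∂̄∂(φ₂φ₄φ₅φ̄₃), φ₁φ₂φ₃φ₄φ̄₁φ̄₂ = ∂̄∂(φ₁φ₄φ₅φ̄₃). -/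
theorem stmt8 {A : Type*} [Ring A] [Algebra ℂ A]
    (φ φb : Fin 5 → A) (del delbar : A →ₗ[ℂ] A)
    (S : Set A) (hS : S = Set.range φ ∪ Set.range φb)
    (hanti : ∀ g ∈ S, ∀ h ∈ S, g * h = -(h * g))
    (hLd : ∀ g ∈ S, ∀ x : A, del (g * x) = del g * x - g * del x)
    (hLdb : ∀ g ∈ S, ∀ x : A, delbar (g * x) = delbar g * x - g * delbar x)
    (hd0 : del (φ 0) = 0) (hd1 : del (φ 1) = 0)
    (hd2 : del (φ 2) = φ 0 * φ 1) (hd3 : del (φ 3) = φ 0 * φ 2) (hd4 : del (φ 4) = φ 1 * φ 2)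
    (hdbφ : ∀ j, delbar (φ j) = 0)
    (hdelφb : ∀ j, del (φb j) = 0)
    (hdb0 : delbar (φb 0) = 0) (hdb1 : delbar (φb 1) = 0)
    (hdb2 : delbar (φb 2) = φb 0 * φb 1) (hdb3 : delbar (φb 3) = φb 0 * φb 2)
    (hdb4 : delbar (φb 4) = φb 1 * φb 2) :
    φ 0 * φ 1 * φ 3 * φ 4 * φb 0 * φb 1 = delbar (del (φ 2 * φ 3 * φ 4 * φb 2)) ∧
    φ 0 * φ 1 * φ 2 * φ 4 * φb 0 * φb 1 = delbar (del (φ 1 * φ 3 * φ 4 * φb 2)) ∧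
    φ 0 * φ 1 * φ 2 * φ 3 * φb 0 * φb 1 = delbar (del (φ 0 * φ 3 * φ 4 * φb 2)) :=
  stmt8_general φ φb del delbar S hS hanti hLd hLdb hd0 hd1 hd2 hd3 hd4 hdbφ hdelφb hdb2
end

section
/- Let V^{•,•} be a bounded double complex. If every element of Z_2^{p,q} that is also d-closed (i.e. ∂-closed and ∂̄-closed) and lies in C_2^{p,q} actually lies in Im ∂ + Im ∂̄ with the stronger property of being d-exact, and if ∂(Z_2^{p,q}) = Im(∂∂̄) in bidegree (p+1,q), then for any α ∈ Z_1^{p,q} (i.e. ∂̄α = 0): the Dolbeault class of α admits a representative α + ∂̄β with ∂(α + ∂̄β) = 0 if and only if α ∈ Z_2^{p,q}. -/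
/-!
`α ∈ Z₂` says exactly that `∂α` is `∂̄`-exact, `∂α = ∂̄u`. If `α + ∂̄β` is `∂`-closed one takes
`u = ∂β`, by anticommutativity. Conversely the hypothesis `∂(Z₂) = Im ∂∂̄` gives `∂α = ∂∂̄ξ`,
and then `α - ∂̄ξ` is a `∂`-closed representative.
-/

/-- A bounded double complex of complex vector spaces, realised inside an ambient module `M`
with bigraded components `V p q`, differentials `∂` (bidegree (1,0)) and `∂̄` (bidegree (0,1))
satisfying `∂² = ∂̄² = ∂∂̄ + ∂̄∂ = 0`. -/
structure DoubleComplex (M : Type*) [AddCommGroup M] [Module ℂ M] where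
  V : ℤ → ℤ → Submodule ℂ M
  del : M →ₗ[ℂ] M
  delbar : M →ₗ[ℂ] M
  del_mem : ∀ p q : ℤ, ∀ x ∈ V p q, del x ∈ V (p + 1) q
  delbar_mem : ∀ p q : ℤ, ∀ x ∈ V p q, delbar x ∈ V p (q + 1)
  del_sq : ∀ x, del (del x) = 0
  delbar_sq : ∀ x, delbar (delbar x) = 0
  anticomm : ∀ x, del (delbar x) + delbar (del x) = 0
  bounded : ∃ N : ℕ, ∀ p q : ℤ, (N < p.natAbs ∨ N < q.natAbs) → V p q = ⊥

namespace DoubleComplex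

variable {M : Type*} [AddCommGroup M] [Module ℂ M]

/-- The `E_r`-closed elements of bidegree `(p,q)`: `α ∈ V^{p,q}` with `∂̄α = 0` together with
a tower `∂α = ∂̄u₁, ∂u₁ = ∂̄u₂, …, ∂u_{r-2} = ∂̄u_{r-1}` with `u_l ∈ V^{p+l,q-l}`.
For `r = 1` this is just `ker ∂̄ ∩ V^{p,q}`. -/
def Zr (D : DoubleComplex M) (r : ℕ) (p q : ℤ) : Set M :=
  {α | α ∈ D.V p q ∧ D.delbar α = 0 ∧
    ∃ u : ℕ → M, u 0 = α ∧
      ∀ i : ℕ, i + 1 ≤ r - 1 →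
        u (i + 1) ∈ D.V (p + (i : ℤ) + 1) (q - (i : ℤ) - 1) ∧
        D.del (u i) = D.delbar (u (i + 1))}

/-- The `E_r`-exact elements of bidegree `(p,q)`: for `r = 1` these are `Im ∂̄ ∩ V^{p,q}`;
for `r ≥ 2` these are the `α = ∂ζ + ∂̄ξ` with `ζ` satisfying a tower
`∂̄ζ = ∂v_{r-3}, ∂̄v_{r-3} = ∂v_{r-4}, …, ∂̄v₀ = 0` (for `r = 2`: `∂̄ζ = 0`). -/
def Cr (D : DoubleComplex M) (r : ℕ) (p q : ℤ) : Set M :=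
  if r ≤ 1 then
    {α | α ∈ D.V p q ∧ ∃ ξ ∈ D.V p (q - 1), α = D.delbar ξ}
  else
    {α | α ∈ D.V p q ∧ ∃ ζ ∈ D.V (p - 1) q, ∃ ξ ∈ D.V p (q - 1), ∃ w : ℕ → M,
      α = D.del ζ + D.delbar ξ ∧ w 0 = ζ ∧
      (∀ j : ℕ, j + 1 ≤ r - 2 → D.delbar (w j) = D.del (w (j + 1))) ∧
      D.delbar (w (r - 2)) = 0}

end DoubleComplex

namespace DoubleComplex

variable {M : Type*} [AddCommGroup M] [Module ℂ M] (D : DoubleComplex M)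

theorem del_delbar_eq_neg (x : M) : D.del (D.delbar x) = -D.delbar (D.del x) :=
  eq_neg_of_add_eq_zero_left (D.anticomm x)

theorem mem_Zr_two_iff {p q : ℤ} {α : M} :
    α ∈ D.Zr 2 p q ↔
      α ∈ D.V p q ∧ D.delbar α = 0 ∧ ∃ u ∈ D.V (p + 1) (q - 1), D.del α = D.delbar u := by
  constructor
  · rintro ⟨hα, hαbar, u, rfl, htower⟩
    obtain ⟨hu, hdel⟩ := htower 0 le_rfl
    exact ⟨hα, hαbar, u 1, by simpa using hu, hdel⟩
  · rintro ⟨hα, hαbar, u, hu, hdel⟩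
    refine ⟨hα, hαbar, fun n => if n = 0 then α else u, rfl, fun i hi => ?_⟩
    obtain rfl : i = 0 := by omega
    exact ⟨by simpa using hu, by simpa using hdel⟩

theorem mem_Zr_two_of_del_add_delbar_eq_zero {p q : ℤ} {α β : M} (hα : α ∈ D.V p q)
    (hαbar : D.delbar α = 0) (hβ : β ∈ D.V p (q - 1))
    (hclosed : D.del (α + D.delbar β) = 0) : α ∈ D.Zr 2 p q := by
  have hdel : D.del α = D.delbar (D.del β) := by
    rw [map_add, D.del_delbar_eq_neg, ← sub_eq_add_neg, sub_eq_zero] at hclosed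
    exact hclosed
  exact D.mem_Zr_two_iff.mpr ⟨hα, hαbar, D.del β, by simpa using D.del_mem p (q - 1) β hβ, hdel⟩

theorem exists_del_add_delbar_eq_zero_of_del_eq_del_delbar {p q : ℤ} {α ξ : M}
    (hξ : ξ ∈ D.V p (q - 1)) (hdel : D.del α = D.del (D.delbar ξ)) :
    ∃ β ∈ D.V p (q - 1), D.del (α + D.delbar β) = 0 :=
  ⟨-ξ, neg_mem hξ, by rw [map_neg, map_add, map_neg, hdel, add_neg_cancel]⟩

end DoubleComplex

theorem stmt16_general {M : Type*} [AddCommGroup M] [Module ℂ M] (D : DoubleComplex M) (p q : ℤ)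
    (h2 : {x : M | ∃ γ ∈ D.Zr 2 p q, x = D.del γ} =
          {x : M | ∃ ξ ∈ D.V p (q - 1), x = D.del (D.delbar ξ)}) :
    ∀ α ∈ D.V p q, D.delbar α = 0 →
      ((∃ β ∈ D.V p (q - 1), D.del (α + D.delbar β) = 0) ↔ α ∈ D.Zr 2 p q) := by
  intro α hα hαbar
  constructor
  · rintro ⟨β, hβ, hclosed⟩
    exact D.mem_Zr_two_of_del_add_delbar_eq_zero hα hαbar hβ hclosed
  · intro hZ
    obtain ⟨ξ, hξ, hdel⟩ := h2.subset ⟨α, hZ, rfl⟩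
    exact D.exists_del_add_delbar_eq_zero_of_del_eq_del_delbar hξ hdel

/-- Abstract form of Lemma 4.2: in a double complex in which every `d`-closed `E_2`-exact
`E_2`-closed element is `d`-exact and `∂(Z_2^{p,q}) = Im(∂∂̄)` in bidegree `(p+1,q)`, a
`∂̄`-closed `α ∈ V^{p,q}` has a `d`-closed Dolbeault representative `α + ∂̄β` iff `α ∈ Z_2^{p,q}`. -/
theorem stmt16 {M : Type*} [AddCommGroup M] [Module ℂ M] (D : DoubleComplex M) (p q : ℤ)
    (h1 : ∀ α ∈ D.Zr 2 p q, D.del α = 0 → D.delbar α = 0 → α ∈ D.Cr 2 p q →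
      ∃ β : M, α = D.del β + D.delbar β)
    (h2 : {x : M | ∃ γ ∈ D.Zr 2 p q, x = D.del γ} =
          {x : M | ∃ ξ ∈ D.V p (q - 1), x = D.del (D.delbar ξ)}) :
    ∀ α ∈ D.V p q, D.delbar α = 0 →
      ((∃ β ∈ D.V p (q - 1), D.del (α + D.delbar β) = 0) ↔ α ∈ D.Zr 2 p q) :=
  stmt16_general D p q h2
end
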